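/- arXiv:2204.05923 — 6 statements merged into one kernel-verified Lean document; each statement's English description precedes it below -/
import Mathlib

section
/- Let (X_n) be a Markov chain, A_n = {X_n ∈ Ω_n}, B_n = {X_n ∈ Ω}, and suppose the chain's Markov property yields ℙ(B_{n+1}|A_n^c ∩ E) = ℙ(B_{n+1}|A_n^c) for events E in the σ-algebra of X_{n−1}, and ℙ(A_n^c | X_{n−1} ∈ Ω_{n−1}^c ∩ Ω^c) = ℙ(A_n^c | X_{n−1} ∈ Ω_{n−1}^c). Then ℙ(B_{n+1} | B_{n−1}^c) ≥ l_{n+1}, where l_{n+1} = ℙ(B_{n+1}|A_n^c) · min( min_{x∈Ω_{n−1}} ℙ(A_n^c | X_{n−1}=x), ℙ(A_n^c | A_{n−1}^c) ). -/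
/-!
Write `A = {X_n ∉ Ω_n}`, `C = {X_{n-1} ∉ Ω}` and `T = {X_{n-1} ∈ Ω_{n-1}}`, and let `m` be the
minimum in `l_{n+1}`. On `C ∩ T` the transition law gives `A` probability at least `m` pointwise,
and on `C ∩ Tᶜ` the restart property gives `ℙ(A | C ∩ Tᶜ) = ℙ(A | Tᶜ) ≥ m`; by total probability
`ℙ(A | C) ≥ m`. Since `C` is `X_{n-1}`-measurable, the Markov property gives
`ℙ(B_{n+1} | A ∩ C) = ℙ(B_{n+1} | A)`, hence
`ℙ(B_{n+1} | C) ≥ ℙ(A | C) · ℙ(B_{n+1} | A ∩ C) ≥ m · ℙ(B_{n+1} | A)`.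
-/

open MeasureTheory ProbabilityTheory ENNReal

section

variable {Ω E : Type*} [MeasurableSpace Ω] [MeasurableSpace E] {μ : Measure Ω}

lemma mul_measure_preimage_le_measure_inter {X : Ω → E} (hX : Measurable X) {T : Set E}
    (hT : MeasurableSet T) {A : Set Ω} {f : E → ℝ≥0∞}
    (hf : μ (X ⁻¹' T ∩ A) = ∫⁻ x in T, f x ∂μ.map X) {c : ℝ≥0∞} (hc : ∀ x ∈ T, c ≤ f x) :
    c * μ (X ⁻¹' T) ≤ μ (X ⁻¹' T ∩ A) :=
  calc c * μ (X ⁻¹' T) = ∫⁻ _ in T, c ∂μ.map X := by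
        rw [setLIntegral_const, Measure.map_apply hX hT]
    _ ≤ ∫⁻ x in T, f x ∂μ.map X := setLIntegral_mono' hT hc
    _ = μ (X ⁻¹' T ∩ A) := hf.symm

lemma le_cond_of_mul_le_of_le_cond_inter_compl [IsFiniteMeasure μ] {A C T : Set Ω}
    (hC : MeasurableSet C) (hT : MeasurableSet T) {m : ℝ≥0∞}
    (hCT : m * μ (C ∩ T) ≤ μ (C ∩ T ∩ A)) (hCTc : m ≤ μ[A | C ∩ Tᶜ]) : m ≤ μ[A | C] := by
  by_cases hC0 : μ C = 0
  · have : μ (C ∩ Tᶜ) = 0 := measure_mono_null Set.inter_subset_left hC0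
    calc m ≤ μ[A | C ∩ Tᶜ] := hCTc
      _ = 0 := by rw [cond_eq_zero_of_meas_eq_zero this, Measure.coe_zero, Pi.zero_apply]
      _ ≤ μ[A | C] := zero_le
  rw [cond_apply hC, ← ENNReal.div_eq_inv_mul,
    ENNReal.le_div_iff_mul_le (Or.inl hC0) (Or.inl (measure_ne_top μ C))]
  calc m * μ C = m * μ (C ∩ T) + m * μ (C ∩ Tᶜ) := by
        rw [← mul_add, ← Set.sdiff_eq, measure_inter_add_sdiff C hT]
    _ ≤ μ (C ∩ T ∩ A) + μ[A | C ∩ Tᶜ] * μ (C ∩ Tᶜ) := by gcongr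
    _ = μ (C ∩ A) := by
        rw [cond_mul_eq_inter (hC.inter hT.compl), ← Set.sdiff_eq, Set.inter_right_comm,
          Set.sdiff_inter_right_comm, measure_inter_add_sdiff _ hT]

lemma cond_mul_cond_inter_le_cond [IsFiniteMeasure μ] {A C : Set Ω} (hA : MeasurableSet A)
    (hC : MeasurableSet C) (B : Set Ω) : μ[A | C] * μ[B | A ∩ C] ≤ μ[B | C] :=
  calc μ[A | C] * μ[B | A ∩ C] = μ[|C][B | A] * μ[|C] A := by
        rw [mul_comm, Set.inter_comm, cond_cond_eq_cond_inter hC hA]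
    _ = μ[|C] (A ∩ B) := cond_mul_eq_inter hA B _
    _ ≤ μ[B | C] := measure_mono Set.inter_subset_right

end

theorem stmt6_general {E : Type*} [mE : MeasurableSpace E] {Ωs : Type*} [MeasurableSpace Ωs]
    (μ : Measure Ωs) [IsProbabilityMeasure μ]
    (X : ℕ → Ωs → E) (hX : ∀ n, Measurable (X n))
    (n : ℕ)
    (Ω : Set E) (hΩ : MeasurableSet Ω)
    (Ωn : ℕ → Set E) (hΩn : ∀ k, MeasurableSet (Ωn k))
    (κ : E → Measure E)
    -- κ is the transition law of X_n given X_{n-1}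
    (hκ : ∀ S : Set E, MeasurableSet S → ∀ T : Set E, MeasurableSet T →
      μ (X (n - 1) ⁻¹' T ∩ X n ⁻¹' S) = ∫⁻ x in T, κ x S ∂(μ.map (X (n - 1))))
    -- Markov property: conditioning further on X_{n-1}-measurable events does not change
    -- the conditional probability of B_{n+1} given A_nᶜ
    (hMarkov : ∀ S : Set Ωs,
      MeasurableSet[MeasurableSpace.comap (X (n - 1)) mE] S →
      ProbabilityTheory.cond μ ((X n ⁻¹' Ωn n)ᶜ ∩ S) (X (n + 1) ⁻¹' Ω) =
      ProbabilityTheory.cond μ ((X n ⁻¹' Ωn n)ᶜ) (X (n + 1) ⁻¹' Ω))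
    -- uniform-restart property: conditional probability of A_nᶜ given X_{n-1} ∈ Ω_{n-1}ᶜ ∩ Ωᶜ
    -- equals that given X_{n-1} ∈ Ω_{n-1}ᶜ
    (hUnif : ProbabilityTheory.cond μ (X (n - 1) ⁻¹' ((Ωn (n - 1))ᶜ ∩ Ωᶜ)) ((X n ⁻¹' Ωn n)ᶜ) =
      ProbabilityTheory.cond μ (X (n - 1) ⁻¹' (Ωn (n - 1))ᶜ) ((X n ⁻¹' Ωn n)ᶜ))
    (l : ℝ≥0∞)
    (hl : l = ProbabilityTheory.cond μ ((X n ⁻¹' Ωn n)ᶜ) (X (n + 1) ⁻¹' Ω) *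
      min (⨅ x ∈ Ωn (n - 1), κ x ((Ωn n)ᶜ))
        (ProbabilityTheory.cond μ ((X (n - 1) ⁻¹' Ωn (n - 1))ᶜ) ((X n ⁻¹' Ωn n)ᶜ))) :
    l ≤ ProbabilityTheory.cond μ ((X (n - 1) ⁻¹' Ω)ᶜ) (X (n + 1) ⁻¹' Ω) := by
  set A := (X n ⁻¹' Ωn n)ᶜ
  set C := (X (n - 1) ⁻¹' Ω)ᶜ
  set T := X (n - 1) ⁻¹' Ωn (n - 1)
  have hA : MeasurableSet A := ((hΩn n).preimage (hX n)).compl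
  have hC : MeasurableSet C := (hΩ.preimage (hX (n - 1))).compl
  have hT : MeasurableSet T := (hΩn (n - 1)).preimage (hX (n - 1))
  have hkernel : (⨅ x ∈ Ωn (n - 1), κ x (Ωn n)ᶜ) * μ (C ∩ T) ≤ μ (C ∩ T ∩ A) :=
    mul_measure_preimage_le_measure_inter (hX (n - 1)) (hΩ.compl.inter (hΩn (n - 1)))
      (hκ _ (hΩn n).compl _ (hΩ.compl.inter (hΩn (n - 1)))) fun _ hx ↦ biInf_le _ hx.2
  have hrestart : μ[A | C ∩ Tᶜ] = μ[A | Tᶜ] := by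
    rw [Set.inter_comm]; exact hUnif
  have hA_given_C : min (⨅ x ∈ Ωn (n - 1), κ x (Ωn n)ᶜ) μ[A | Tᶜ] ≤ μ[A | C] :=
    le_cond_of_mul_le_of_le_cond_inter_compl hC hT
      ((mul_le_mul_left (min_le_left _ _) _).trans hkernel)
      ((min_le_right _ _).trans hrestart.ge)
  have hmarkov : μ[X (n + 1) ⁻¹' Ω | A ∩ C] = μ[X (n + 1) ⁻¹' Ω | A] :=
    hMarkov C ⟨Ωᶜ, hΩ.compl, rfl⟩
  rw [hl]
  calc _ ≤ μ[X (n + 1) ⁻¹' Ω | A] * μ[A | C] := by gcongr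
    _ = μ[A | C] * μ[X (n + 1) ⁻¹' Ω | A ∩ C] := by rw [hmarkov, mul_comm]
    _ ≤ _ := cond_mul_cond_inter_le_cond hA hC _

theorem stmt6 {E : Type*} [mE : MeasurableSpace E] {Ωs : Type*} [MeasurableSpace Ωs]
    (μ : Measure Ωs) [IsProbabilityMeasure μ]
    (X : ℕ → Ωs → E) (hX : ∀ n, Measurable (X n))
    (n : ℕ) (hn : 1 ≤ n)
    (Ω : Set E) (hΩ : MeasurableSet Ω)
    (Ωn : ℕ → Set E) (hΩn : ∀ k, MeasurableSet (Ωn k))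
    (κ : E → Measure E)
    -- κ is the transition law of X_n given X_{n-1}
    (hκ : ∀ S : Set E, MeasurableSet S → ∀ T : Set E, MeasurableSet T →
      μ (X (n - 1) ⁻¹' T ∩ X n ⁻¹' S) = ∫⁻ x in T, κ x S ∂(μ.map (X (n - 1))))
    -- Markov property: conditioning further on X_{n-1}-measurable events does not change
    -- the conditional probability of B_{n+1} given A_nᶜ
    (hMarkov : ∀ S : Set Ωs,
      MeasurableSet[MeasurableSpace.comap (X (n - 1)) mE] S →
      ProbabilityTheory.cond μ ((X n ⁻¹' Ωn n)ᶜ ∩ S) (X (n + 1) ⁻¹' Ω) =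
      ProbabilityTheory.cond μ ((X n ⁻¹' Ωn n)ᶜ) (X (n + 1) ⁻¹' Ω))
    -- uniform-restart property: conditional probability of A_nᶜ given X_{n-1} ∈ Ω_{n-1}ᶜ ∩ Ωᶜ
    -- equals that given X_{n-1} ∈ Ω_{n-1}ᶜ
    (hUnif : ProbabilityTheory.cond μ (X (n - 1) ⁻¹' ((Ωn (n - 1))ᶜ ∩ Ωᶜ)) ((X n ⁻¹' Ωn n)ᶜ) =
      ProbabilityTheory.cond μ (X (n - 1) ⁻¹' (Ωn (n - 1))ᶜ) ((X n ⁻¹' Ωn n)ᶜ))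
    (l : ℝ≥0∞)
    (hl : l = ProbabilityTheory.cond μ ((X n ⁻¹' Ωn n)ᶜ) (X (n + 1) ⁻¹' Ω) *
      min (⨅ x ∈ Ωn (n - 1), κ x ((Ωn n)ᶜ))
        (ProbabilityTheory.cond μ ((X (n - 1) ⁻¹' Ωn (n - 1))ᶜ) ((X n ⁻¹' Ωn n)ᶜ))) :
    l ≤ ProbabilityTheory.cond μ ((X (n - 1) ⁻¹' Ω)ᶜ) (X (n + 1) ⁻¹' Ω) :=
  stmt6_general (mE := mE) μ X hX n Ω hΩ Ωn hΩn κ hκ hMarkov hUnif l hl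
end

section
/- Consider the recurrence r_{n+1} = g(n) r_n + h(n) for n ≥ n₀ with g(n) = 1 − κ n^{−α} − β₂ n^{−α₂} and h(n) = β₂ n^{−α₂}, where κ, β₂ > 0, 0 < α < α₂ < 1, r_{n₀} ∈ [0,1], and g(n₀) > 0. Then r_n = O(n^{α−α₂}) as n → ∞; in particular r_n → 0. -/
open Filter Asymptotics

/-!
Compare `|r n|` with `C n^(α-α₂)`. By convexity of `x ↦ x^(α-α₂)`, one step of the comparison
sequence loses at most `C (α₂-α) n^(α-α₂-1)`, while the damping term of the recurrence removes
`C κ n^(-α₂)`. For `C ≥ 2β₂/κ` and `n` large the damping pays for both this loss and the forcing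
`β₂ n^(-α₂)`, so the bound propagates by induction.
-/

theorem one_add_mul_le_rpow_one_add_of_nonpos {s p : ℝ} (hs : 0 ≤ s) (hp₁ : -1 ≤ p)
    (hp₀ : p ≤ 0) : 1 + p * s ≤ (1 + s) ^ p := by
  have hpos : 0 < (1 + s) ^ (-p) := by positivity
  -- Bernoulli's inequality for the exponent `-p ∈ [0, 1]`, then invert.
  have hbern : (1 + s) ^ (-p) ≤ 1 + -p * s :=
    rpow_one_add_le_one_add_mul_self (by linarith) (by linarith) (by linarith)
  calc 1 + p * s ≤ (1 + -p * s)⁻¹ := by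
        rw [← one_div, le_div_iff₀ (by nlinarith)]
        nlinarith [sq_nonneg (p * s)]
    _ ≤ ((1 + s) ^ (-p))⁻¹ := inv_anti₀ hpos hbern
    _ = (1 + s) ^ p := by rw [← Real.rpow_neg (by positivity), neg_neg]

theorem rpow_add_mul_rpow_sub_one_le_add_one_rpow {x p : ℝ} (hx : 0 < x) (hp₁ : -1 ≤ p)
    (hp₀ : p ≤ 0) : x ^ p + p * x ^ (p - 1) ≤ (x + 1) ^ p := by
  have hsplit : x + 1 = x * (1 + x⁻¹) := by field_simp
  calc x ^ p + p * x ^ (p - 1) = x ^ p * (1 + p * x⁻¹) := by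
        rw [Real.rpow_sub_one hx.ne', div_eq_mul_inv]; ring
    _ ≤ x ^ p * (1 + x⁻¹) ^ p := by
        gcongr
        exact one_add_mul_le_rpow_one_add_of_nonpos (by positivity) hp₁ hp₀
    _ = (x + 1) ^ p := by rw [hsplit, Real.mul_rpow hx.le (by positivity)]

theorem abs_le_of_supersolution {r g h u : ℕ → ℝ} {N : ℕ}
    (hrec : ∀ n, N ≤ n → r (n + 1) = g n * r n + h n) (hg : ∀ n, N ≤ n → 0 ≤ g n)
    (hu : ∀ n, N ≤ n → g n * u n + |h n| ≤ u (n + 1)) (hN : |r N| ≤ u N) :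
    ∀ n, N ≤ n → |r n| ≤ u n := by
  intro n hn
  induction n, hn using Nat.le_induction with
  | base => exact hN
  | succ n hn ih =>
    calc |r (n + 1)| = |g n * r n + h n| := by rw [hrec n hn]
      _ ≤ g n * |r n| + |h n| := by
        simpa only [abs_mul, abs_of_nonneg (hg n hn)] using abs_add_le (g n * r n) (h n)
      _ ≤ g n * u n + |h n| := by gcongr; exact hg n hn
      _ ≤ u (n + 1) := hu n hn

theorem tendsto_natCast_rpow_of_neg {q : ℝ} (hq : q < 0) :
    Tendsto (fun n : ℕ => (n : ℝ) ^ q) atTop (nhds 0) := by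
  simpa [Function.comp_def] using
    (tendsto_rpow_neg_atTop (neg_pos.2 hq)).comp tendsto_natCast_atTop_atTop

theorem rpow_supersolution_step {κ β α α₂ C x : ℝ} (hx : 0 < x) (hαα₂ : α ≤ α₂)
    (hα₂α : α₂ - α ≤ 1) (hβ : 0 ≤ β) (hC : 0 ≤ C) (hβC : 2 * β ≤ C * κ)
    (hsmall : (α₂ - α) * x ^ (α - 1) ≤ κ / 2) :
    (1 - κ * x ^ (-α) - β * x ^ (-α₂)) * (C * x ^ (α - α₂)) + β * x ^ (-α₂)
      ≤ C * (x + 1) ^ (α - α₂) := by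
  have hmul : x ^ (-α) * x ^ (α - α₂) = x ^ (-α₂) := by
    rw [← Real.rpow_add hx]; ring_nf
  have hsub : x ^ (α - α₂ - 1) = x ^ (-α₂) * x ^ (α - 1) := by
    rw [← Real.rpow_add hx]; ring_nf
  have htangent := rpow_add_mul_rpow_sub_one_le_add_one_rpow hx
    (p := α - α₂) (by linarith) (by linarith)
  rw [hsub] at htangent
  have hy : 0 ≤ x ^ (-α₂) := by positivity
  have hw : 0 ≤ x ^ (α - α₂) := by positivity
  nlinarith [mul_nonneg (mul_nonneg hC hy) (sub_nonneg.2 hsmall), mul_nonneg hy (sub_nonneg.2 hβC),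
    mul_nonneg (mul_nonneg hβ hC) (mul_nonneg hy hw), mul_le_mul_of_nonneg_left htangent hC]

theorem stmt9_general (κ β₂ α α₂ : ℝ) (hκ : 0 < κ) (hβ₂ : 0 < β₂)
    (hα : 0 < α) (hαα₂ : α < α₂) (hα₂ : α₂ < 1)
    (n₀ : ℕ) (r g h : ℕ → ℝ)
    (hg : ∀ n, g n = 1 - κ * (n : ℝ) ^ (-α) - β₂ * (n : ℝ) ^ (-α₂))
    (hh : ∀ n, h n = β₂ * (n : ℝ) ^ (-α₂))
    (hrec : ∀ n, n₀ ≤ n → r (n + 1) = g n * r n + h n) :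
    (fun n => r n) =O[atTop] (fun n : ℕ => (n : ℝ) ^ (α - α₂)) ∧
    Tendsto r atTop (nhds 0) := by
  have hg_nonneg : ∀ᶠ n : ℕ in atTop, 0 ≤ g n := by
    have hlim := ((tendsto_natCast_rpow_of_neg (neg_lt_zero.2 hα)).const_mul κ).add
      ((tendsto_natCast_rpow_of_neg (by linarith : -α₂ < 0)).const_mul β₂)
    rw [mul_zero, mul_zero, add_zero] at hlim
    filter_upwards [hlim.eventually_le_const one_pos] with n hn
    rw [hg n]; linarith
  have hsmall : ∀ᶠ n : ℕ in atTop, (α₂ - α) * (n : ℝ) ^ (α - 1) ≤ κ / 2 := by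
    have hlim := (tendsto_natCast_rpow_of_neg (by linarith : α - 1 < 0)).const_mul (α₂ - α)
    rw [mul_zero] at hlim
    exact hlim.eventually_le_const (by positivity)
  obtain ⟨N, hN⟩ := (hg_nonneg.and (hsmall.and ((eventually_ge_atTop n₀).and
    (eventually_ge_atTop 1)))).exists_forall_of_atTop
  have hNpos : (0 : ℝ) < N := by exact_mod_cast (hN N le_rfl).2.2.2
  set C := max (2 * β₂ / κ) (|r N| / (N : ℝ) ^ (α - α₂))
  have hβC : 2 * β₂ ≤ C * κ := (div_le_iff₀ hκ).1 (le_max_left _ _)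
  have hbound : ∀ n, N ≤ n → |r n| ≤ C * (n : ℝ) ^ (α - α₂) := by
    refine abs_le_of_supersolution (fun n hn => hrec n ((hN n hn).2.2.1))
      (fun n hn => (hN n hn).1) (fun n hn => ?_) ?_
    · have hnpos : (0 : ℝ) < n := by exact_mod_cast (hN n hn).2.2.2
      rw [hg, hh, abs_of_nonneg (by positivity), Nat.cast_succ]
      exact rpow_supersolution_step hnpos hαα₂.le (by linarith) hβ₂.le
        ((le_max_left _ _).trans' (by positivity)) hβC (hN n hn).2.1
    · exact (div_le_iff₀ (by positivity)).1 (le_max_right _ _)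
  have hO : (fun n => r n) =O[atTop] (fun n : ℕ => (n : ℝ) ^ (α - α₂)) := by
    refine IsBigO.of_bound C (eventually_atTop.2 ⟨N, fun n hn => ?_⟩)
    rw [Real.norm_eq_abs, Real.norm_eq_abs, abs_of_nonneg (Real.rpow_nonneg n.cast_nonneg _)]
    exact hbound n hn
  exact ⟨hO, hO.trans_tendsto (tendsto_natCast_rpow_of_neg (by linarith))⟩

theorem stmt9 (κ β₂ α α₂ : ℝ) (hκ : 0 < κ) (hβ₂ : 0 < β₂)
    (hα : 0 < α) (hαα₂ : α < α₂) (hα₂ : α₂ < 1)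
    (n₀ : ℕ) (r g h : ℕ → ℝ)
    (hg : ∀ n, g n = 1 - κ * (n : ℝ) ^ (-α) - β₂ * (n : ℝ) ^ (-α₂))
    (hh : ∀ n, h n = β₂ * (n : ℝ) ^ (-α₂))
    (hrec : ∀ n, n₀ ≤ n → r (n + 1) = g n * r n + h n)
    (hr0 : r n₀ ∈ Set.Icc (0 : ℝ) 1)
    (hgn₀ : 0 < g n₀) :
    (fun n => r n) =O[atTop] (fun n : ℕ => (n : ℝ) ^ (α - α₂)) ∧
    Tendsto r atTop (nhds 0) :=
  stmt9_general κ β₂ α α₂ hκ hβ₂ hα hαα₂ hα₂ n₀ r g h hg hh hrec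
end

section
/- For a > 1 and z > 2(a−1), the upper incomplete gamma function satisfies Γ(a, z) < 2 z^{a−1} e^{−z}, where Γ(a,z) = ∫_z^∞ t^{a−1} e^{−t} dt. -/
/-!
For `t > z` we have `t / z ≤ exp (t / z - 1)`, so `t ^ (a - 1) ≤ z ^ (a - 1) * exp ((a - 1) (t - z) / z)`,
and `z > 2 (a - 1)` makes the exponent smaller than `(t - z) / 2`. Hence the integrand is dominated
by `z ^ (a - 1) e ^ {-z} e ^ {-(t - z) / 2}`, whose integral over `(z, ∞)` is `2 z ^ (a - 1) e ^ {-z}`.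
-/

open Real MeasureTheory

theorem setIntegral_lt_setIntegral_of_forall_lt {X : Type*} [MeasurableSpace X] {μ : Measure X}
    {s : Set X} {f g : X → ℝ} (hs : MeasurableSet s) (hμs : μ s ≠ 0)
    (hf : IntegrableOn f s μ) (hg : IntegrableOn g s μ) (hlt : ∀ x ∈ s, f x < g x) :
    ∫ x in s, f x ∂μ < ∫ x in s, g x ∂μ := by
  have hpos : 0 < ∫ x in s, (g - f) x ∂μ := by
    rw [setIntegral_pos_iff_support_of_nonneg_ae _ (hg.sub hf)]
    · have hsupp : Function.support (g - f) ∩ s = s :=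
        Set.inter_eq_self_of_subset_right fun x hx => (sub_pos.mpr (hlt x hx)).ne'
      rw [hsupp]
      exact pos_iff_ne_zero.mpr hμs
    · filter_upwards [ae_restrict_mem hs] with x hx
      exact (sub_pos.mpr (hlt x hx)).le
  rwa [integral_sub' hg hf, sub_pos] at hpos

theorem rpow_le_rpow_mul_exp {p z t : ℝ} (hp : 0 ≤ p) (hz : 0 < z) (ht : 0 ≤ t) :
    t ^ p ≤ z ^ p * exp (p * (t - z) / z) := by
  have hquot : t / z ≤ exp ((t - z) / z) := by
    calc t / z = (t - z) / z + 1 := by field_simp; ring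
      _ ≤ exp ((t - z) / z) := add_one_le_exp _
  calc t ^ p = z ^ p * (t / z) ^ p := by
        rw [div_rpow ht hz.le, mul_div_cancel₀ _ (rpow_pos_of_pos hz p).ne']
    _ ≤ z ^ p * exp ((t - z) / z) ^ p := by gcongr
    _ = z ^ p * exp (p * (t - z) / z) := by rw [← exp_mul]; ring_nf

theorem rpow_mul_exp_neg_lt {p z t : ℝ} (hp : 0 ≤ p) (hz : 2 * p < z) (ht : z < t) :
    t ^ p * exp (-t) < z ^ p * exp (-z / 2) * exp (-(1 / 2) * t) := by
  have hz0 : 0 < z := by linarith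
  have hexponent : p * (t - z) / z - t < -z / 2 + -(1 / 2) * t := by
    rw [div_sub' hz0.ne', div_lt_iff₀ hz0]
    nlinarith
  calc t ^ p * exp (-t) ≤ z ^ p * exp (p * (t - z) / z) * exp (-t) := by
        gcongr
        exact rpow_le_rpow_mul_exp hp hz0 (hz0.trans ht).le
    _ = z ^ p * exp (p * (t - z) / z - t) := by rw [mul_assoc, ← exp_add, ← sub_eq_add_neg]
    _ < z ^ p * exp (-z / 2 + -(1 / 2) * t) := by gcongr
    _ = z ^ p * exp (-z / 2) * exp (-(1 / 2) * t) := by rw [exp_add, mul_assoc]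

theorem stmt12 (a z : ℝ) (ha : 1 < a) (hz : 2 * (a - 1) < z) :
    ∫ t in Set.Ioi z, t ^ (a - 1) * Real.exp (-t) < 2 * z ^ (a - 1) * Real.exp (-z) := by
  have hz0 : 0 < z := by linarith
  have hhalf : -(1 / 2 : ℝ) < 0 := by norm_num
  have hf : IntegrableOn (fun t => t ^ (a - 1) * exp (-t)) (Set.Ioi z) :=
    ((GammaIntegral_convergent (by linarith)).mono_set (Set.Ioi_subset_Ioi hz0.le)).congr_fun
      (fun t _ => mul_comm _ _) measurableSet_Ioi
  have hg := (integrableOn_exp_mul_Ioi hhalf z).const_mul (z ^ (a - 1) * exp (-z / 2))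
  calc ∫ t in Set.Ioi z, t ^ (a - 1) * exp (-t)
      < ∫ t in Set.Ioi z, z ^ (a - 1) * exp (-z / 2) * exp (-(1 / 2) * t) :=
        setIntegral_lt_setIntegral_of_forall_lt measurableSet_Ioi (by simp) hf hg
          fun t ht => rpow_mul_exp_neg_lt (by linarith) hz ht
    _ = 2 * z ^ (a - 1) * exp (-z) := by
        have hsplit : exp (-z) = exp (-z / 2) * exp (-(1 / 2) * z) := by rw [← exp_add]; ring_nf
        rw [integral_const_mul, integral_exp_mul_Ioi hhalf, hsplit]
        ring
end

section
/- Let Q ~ χ²_d with d ≥ 3 and suppose c > 0, n ∈ ℕ satisfies c²(log n)/2 > d − 2. Then ℙ(Q > c² log n) < (2^{2−d/2}/Γ(d/2)) (c² log n)^{d/2−1} n^{−c²/2}. -/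
/-!
Under the standard Gaussian on `ℝᵈ` the norm has density proportional to `r^(d-1) e^(-r²/2)`
(polar coordinates), so after the substitution `u = r²/2` the tail `ℙ(Q > t)` is
`Γ(d/2, t/2) / Γ(d/2)`; the unknown constant cancels against the total mass. For `u > z > 2(a-1)`
one has `(u/z)^(a-1) < e^((a-1)(u-z)/z) < e^((u-z)/2)`, so the integrand of `Γ(a, z)` lies below
`z^(a-1) e^(-z) e^(-(u-z)/2)`, whose integral over `(z, ∞)` is `2 z^(a-1) e^(-z)`.
-/

open MeasureTheory ProbabilityTheory Real Set Filter
open scoped ENNReal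

theorem lintegral_pi_fin_prod {n : ℕ} {X : Fin n → Type*} [∀ i, MeasurableSpace (X i)]
    (μ : ∀ i, Measure (X i)) [∀ i, SigmaFinite (μ i)] (f : ∀ i, X i → ℝ≥0∞)
    (hf : ∀ i, Measurable (f i)) :
    ∫⁻ x, ∏ i, f i (x i) ∂Measure.pi μ = ∏ i, ∫⁻ y, f i y ∂μ i := by
  induction n with
  | zero => simp
  | succ n ih =>
    have hm : Measurable fun x : ∀ i, X i => ∏ i, f i (x i) :=
      Finset.measurable_prod _ fun i _ => (hf i).comp (measurable_pi_apply i)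
    rw [← (measurePreserving_piFinSuccAbove μ 0).symm.lintegral_comp hm]
    simp only [MeasurableEquiv.piFinSuccAbove_symm_apply, Fin.insertNthEquiv,
      Fin.prod_univ_succAbove _ 0, Equiv.coe_fn_mk, Fin.insertNth_apply_same,
      Fin.insertNth_apply_succAbove]
    have hm' : Measurable fun x : ∀ j, X (Fin.succAbove 0 j) => ∏ i, f _ (x i) :=
      Finset.measurable_prod _ fun i _ => (hf _).comp (measurable_pi_apply i)
    rw [lintegral_prod_mul (hf 0).aemeasurable hm'.aemeasurable, ih _ _ fun i => hf _]

theorem pi_withDensity_fin {n : ℕ} {X : Fin n → Type*} [∀ i, MeasurableSpace (X i)]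
    (μ : ∀ i, Measure (X i)) [∀ i, SigmaFinite (μ i)] (f : ∀ i, X i → ℝ≥0∞)
    (hf : ∀ i, Measurable (f i)) [∀ i, SigmaFinite ((μ i).withDensity (f i))] :
    Measure.pi (fun i => (μ i).withDensity (f i)) =
      (Measure.pi μ).withDensity fun x => ∏ i, f i (x i) := by
  refine Measure.pi_eq fun s hs => ?_
  rw [withDensity_apply _ (.univ_pi hs), ← lintegral_indicator (.univ_pi hs)]
  have hind : (univ.pi s).indicator (fun x => ∏ i, f i (x i)) =
      fun x => ∏ i, (s i).indicator (f i) (x i) := by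
    ext x
    by_cases h : x ∈ univ.pi s
    · rw [indicator_of_mem h]
      exact Finset.prod_congr rfl fun i _ => (indicator_of_mem (h i (mem_univ i)) _).symm
    · obtain ⟨i, -, hi⟩ := not_forall₂.mp h
      rw [indicator_of_notMem h]
      exact (Finset.prod_eq_zero (Finset.mem_univ i) (indicator_of_notMem hi _)).symm
  rw [hind, lintegral_pi_fin_prod μ _ fun i => (hf i).indicator (hs i)]
  exact Finset.prod_congr rfl fun i _ => by
    rw [lintegral_indicator (hs i), withDensity_apply _ (hs i)]

theorem prod_gaussianPDFReal_zero_one {n : ℕ} (x : Fin n → ℝ) :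
    ∏ i, gaussianPDFReal 0 1 (x i) = (√(2 * π))⁻¹ ^ n * exp (-‖WithLp.toLp 2 x‖ ^ 2 / 2) := by
  rw [EuclideanSpace.real_norm_sq_eq]
  simp [gaussianPDFReal, Finset.prod_mul_distrib, ← Real.exp_sum, Finset.sum_div, neg_div]

theorem stdGaussian_eq_withDensity (n : ℕ) :
    stdGaussian (EuclideanSpace ℝ (Fin n)) =
      volume.withDensity fun y => ENNReal.ofReal ((√(2 * π))⁻¹ ^ n * exp (-‖y‖ ^ 2 / 2)) := by
  have : SigmaFinite ((volume : Measure ℝ).withDensity (gaussianPDF 0 1)) :=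
    SigmaFinite.withDensity_ofReal _
  ext A hA
  rw [← map_pi_eq_stdGaussian, Measure.map_apply (PiLp.volume_preserving_toLp _).measurable hA]
  simp_rw [gaussianReal_of_var_ne_zero 0 one_ne_zero]
  rw [pi_withDensity_fin _ _ fun _ => measurable_gaussianPDF 0 1,
    withDensity_apply _ (hA.preimage (PiLp.volume_preserving_toLp _).measurable),
    withDensity_apply _ hA, ← volume_pi,
    ← (PiLp.volume_preserving_toLp (Fin n)).setLIntegral_comp_preimage hA (by fun_prop)]
  simp_rw [← prod_gaussianPDFReal_zero_one, gaussianPDF,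
    ENNReal.ofReal_prod_of_nonneg fun i _ => gaussianPDFReal_nonneg 0 1 _]

theorem exists_measureReal_stdGaussian_norm_mem {n : ℕ} (hn : n ≠ 0) :
    ∃ K : ℝ, ∀ s : Set ℝ, MeasurableSet s →
      (stdGaussian (EuclideanSpace ℝ (Fin n))).real {y | ‖y‖ ∈ s} =
        K * ∫ r in Ioi 0 ∩ s, r ^ (n - 1) * exp (-r ^ 2 / 2) := by
  have : Nontrivial (EuclideanSpace ℝ (Fin n)) := by
    have : Nonempty (Fin n) := ⟨⟨0, Nat.pos_of_ne_zero hn⟩⟩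
    infer_instance
  set C : ℝ := (√(2 * π))⁻¹ ^ n
  refine ⟨n * volume.real (Metric.ball (0 : EuclideanSpace ℝ (Fin n)) 1) * C, fun s hs => ?_⟩
  have hS : MeasurableSet {y : EuclideanSpace ℝ (Fin n) | ‖y‖ ∈ s} := measurable_norm hs
  rw [measureReal_def, stdGaussian_eq_withDensity, withDensity_apply _ hS,
    ← integral_eq_lintegral_of_nonneg_ae (.of_forall fun _ => by positivity) (by fun_prop),
    ← integral_indicator hS]
  have hF := integral_fun_norm_addHaar (volume : Measure (EuclideanSpace ℝ (Fin n)))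
    (s.indicator fun r => C * exp (-r ^ 2 / 2))
  rw [finrank_euclideanSpace_fin] at hF
  have hind : ∀ r : ℝ, r ^ (n - 1) • s.indicator (fun r => C * exp (-r ^ 2 / 2)) r =
      s.indicator (fun r => C * (r ^ (n - 1) * exp (-r ^ 2 / 2))) r := by
    intro r
    simp only [indicator, smul_eq_mul]
    split_ifs <;> ring
  simp_rw [hind, setIntegral_indicator hs, integral_const_mul] at hF
  rw [nsmul_eq_mul, smul_eq_mul, ← mul_assoc, ← mul_assoc] at hF
  exact (integral_congr_ae (.of_forall fun y => indicator_comp_right (s := s)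
    (g := fun r : ℝ => C * exp (-r ^ 2 / 2)) norm (x := y))).trans hF

noncomputable def upperIncompleteGamma (a z : ℝ) : ℝ :=
  ∫ u in Ioi z, exp (-u) * u ^ (a - 1)

theorem upperIncompleteGamma_zero {a : ℝ} (ha : 0 < a) : upperIncompleteGamma a 0 = Gamma a :=
  (Gamma_eq_integral ha).symm

theorem pow_mul_exp_neg_sq_div_two_eq {n : ℕ} (hn : n ≠ 0) {r : ℝ} (hr : 0 < r) :
    r ^ (n - 1) * exp (-r ^ 2 / 2) =
      2 ^ ((n : ℝ) / 2 - 1) * (r * (exp (-(r ^ 2 / 2)) * (r ^ 2 / 2) ^ ((n : ℝ) / 2 - 1))) := by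
  have h1 : (r ^ 2 / 2) ^ ((n : ℝ) / 2 - 1) = r ^ ((n : ℝ) - 2) / 2 ^ ((n : ℝ) / 2 - 1) := by
    rw [div_rpow (by positivity) zero_le_two, ← rpow_natCast, ← rpow_mul hr.le]
    ring_nf
  have h2 : r * r ^ ((n : ℝ) - 2) = r ^ (n - 1) := by
    rw [← rpow_natCast, Nat.cast_sub (Nat.one_le_iff_ne_zero.mpr hn), Nat.cast_one,
      show (n : ℝ) - 1 = 1 + ((n : ℝ) - 2) by ring, rpow_add hr, rpow_one]
  rw [h1, neg_div, ← h2]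
  field_simp

theorem integral_Ioi_pow_mul_exp_neg_sq_div_two {n : ℕ} (hn : n ≠ 0) {a : ℝ} (ha : 0 ≤ a) :
    ∫ r in Ioi a, r ^ (n - 1) * exp (-r ^ 2 / 2) =
      2 ^ ((n : ℝ) / 2 - 1) * upperIncompleteGamma ((n : ℝ) / 2) (a ^ 2 / 2) := by
  have hmono : StrictMonoOn (fun r : ℝ => r ^ 2 / 2) (Ici a) := fun x hx y hy hxy => by
    simp only
    gcongr
    exact ha.trans hx
  have himage : (fun r : ℝ => r ^ 2 / 2) '' Ioi a = Ioi (a ^ 2 / 2) :=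
    (by fun_prop : Continuous fun r : ℝ => r ^ 2 / 2).continuousOn.image_Ioi_of_strictMonoOn hmono
      ((tendsto_pow_atTop two_ne_zero).atTop_div_const two_pos)
  have hderiv : ∀ r ∈ Ioi a, HasDerivWithinAt (fun r : ℝ => r ^ 2 / 2) r (Ioi a) r := fun r _ => by
    simpa using ((hasDerivAt_pow 2 r).div_const 2).hasDerivWithinAt
  rw [upperIncompleteGamma, ← himage, integral_image_eq_integral_abs_deriv_smul measurableSet_Ioi
    hderiv (hmono.injOn.mono Ioi_subset_Ici_self), ← integral_const_mul]
  refine setIntegral_congr_fun measurableSet_Ioi fun r (hr : a < r) => ?_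
  rw [abs_of_pos (ha.trans_lt hr), smul_eq_mul, pow_mul_exp_neg_sq_div_two_eq hn (ha.trans_lt hr)]

theorem measureReal_pi_gaussianReal_sum_sq_gt {n : ℕ} (hn : n ≠ 0) {t : ℝ} (ht : 0 ≤ t) :
    (Measure.pi fun _ : Fin n => gaussianReal 0 1).real {x | t < ∑ i, x i ^ 2} =
      upperIncompleteGamma ((n : ℝ) / 2) (t / 2) / Gamma ((n : ℝ) / 2) := by
  obtain ⟨K, hK⟩ := exists_measureReal_stdGaussian_norm_mem hn
  have hset : {x : Fin n → ℝ | t < ∑ i, x i ^ 2} = WithLp.toLp 2 ⁻¹' {y | ‖y‖ ∈ Ioi √t} := by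
    ext x
    simp [sqrt_lt ht (norm_nonneg _), EuclideanSpace.real_norm_sq_eq]
  have htail := hK (Ioi √t) measurableSet_Ioi
  have htotal := hK univ MeasurableSet.univ
  rw [Ioi_inter_Ioi, max_eq_right (sqrt_nonneg t),
    integral_Ioi_pow_mul_exp_neg_sq_div_two hn (sqrt_nonneg t), sq_sqrt ht] at htail
  rw [inter_univ, integral_Ioi_pow_mul_exp_neg_sq_div_two hn le_rfl] at htotal
  simp only [mem_univ, ofPred_true, probReal_univ] at htotal
  rw [zero_pow two_ne_zero, zero_div, upperIncompleteGamma_zero (by positivity)] at htotal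
  have hS : MeasurableSet {y : EuclideanSpace ℝ (Fin n) | ‖y‖ ∈ Ioi √t} :=
    measurable_norm measurableSet_Ioi
  rw [hset, ← map_measureReal_apply (PiLp.volume_preserving_toLp (Fin n)).measurable hS,
    map_pi_eq_stdGaussian, htail, eq_div_iff (Gamma_pos_of_pos (by positivity)).ne']
  linear_combination -upperIncompleteGamma ((n : ℝ) / 2) (t / 2) * htotal

theorem setIntegral_lt_setIntegral_of_lt {α : Type*} [MeasurableSpace α] {μ : Measure α}
    {f g : α → ℝ} {s : Set α} (hs : MeasurableSet s) (hμs : μ s ≠ 0) (hf : IntegrableOn f s μ)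
    (hg : IntegrableOn g s μ) (hlt : ∀ x ∈ s, f x < g x) :
    ∫ x in s, f x ∂μ < ∫ x in s, g x ∂μ := by
  rw [← sub_pos, ← integral_sub hg hf, setIntegral_pos_iff_support_of_nonneg_ae
    ((ae_restrict_mem hs).mono fun x hx => (sub_pos.mpr (hlt x hx)).le) (hg.sub hf)]
  have hsupp : (Function.support fun x => g x - f x) ∩ s = s :=
    inter_eq_right.mpr fun x hx => (sub_pos.mpr (hlt x hx)).ne'
  rwa [hsupp, pos_iff_ne_zero]

theorem exp_neg_mul_rpow_lt {a z u : ℝ} (ha : 1 < a) (hz : 2 * (a - 1) < z) (hu : z < u) :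
    exp (-u) * u ^ (a - 1) < z ^ (a - 1) * exp (-z) * exp (-(u - z) / 2) := by
  have hz0 : 0 < z := by linarith
  have hu0 : 0 < u := hz0.trans hu
  have hlog : (a - 1) * log (u / z) < (u - z) / 2 :=
    calc (a - 1) * log (u / z) < (a - 1) * (u / z - 1) :=
          mul_lt_mul_of_pos_left (log_lt_sub_one_of_pos (by positivity)
            (by rw [Ne, div_eq_one_iff_eq hz0.ne']; exact hu.ne')) (by linarith)
      _ = (u - z) * ((a - 1) / z) := by field_simp
      _ < (u - z) * (1 / 2) :=
          mul_lt_mul_of_pos_left (by rw [div_lt_iff₀ hz0]; linarith) (by linarith)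
      _ = (u - z) / 2 := by ring
  have hsplit : u ^ (a - 1) = z ^ (a - 1) * exp ((a - 1) * log (u / z)) := by
    rw [mul_comm (a - 1), ← rpow_def_of_pos (by positivity), ← mul_rpow hz0.le (by positivity),
      mul_div_cancel₀ _ hz0.ne']
  calc exp (-u) * u ^ (a - 1) = z ^ (a - 1) * exp (-u + (a - 1) * log (u / z)) := by
        rw [hsplit, exp_add]; ring
    _ < z ^ (a - 1) * exp (-u + (u - z) / 2) := by gcongr
    _ = z ^ (a - 1) * exp (-z) * exp (-(u - z) / 2) := by
        rw [mul_assoc, ← exp_add]; ring_nf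

theorem integral_Ioi_exp_neg_sub_div_two (z : ℝ) : ∫ u in Ioi z, exp (-(u - z) / 2) = 2 := by
  have : ∀ u, exp (-(u - z) / 2) = exp (z / 2) * exp (-(1 / 2) * u) := fun u => by
    rw [← exp_add]; ring_nf
  simp_rw [this]
  rw [integral_const_mul, integral_exp_mul_Ioi (by norm_num) z, neg_div_neg_eq, mul_div_assoc',
    ← exp_add]
  ring_nf
  simp

theorem upperIncompleteGamma_lt {a z : ℝ} (ha : 1 < a) (hz : 2 * (a - 1) < z) :
    upperIncompleteGamma a z < 2 * z ^ (a - 1) * exp (-z) := by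
  have hz0 : 0 < z := by linarith
  have hgauss : IntegrableOn (fun u => exp (-u) * u ^ (a - 1)) (Ioi z) :=
    (GammaIntegral_convergent (by linarith)).mono_set (Ioi_subset_Ioi hz0.le)
  have hexp : IntegrableOn (fun u => z ^ (a - 1) * exp (-z) * exp (-(u - z) / 2)) (Ioi z) := by
    refine IntegrableOn.congr_fun
      ((integrableOn_exp_mul_Ioi (by norm_num : -(1 / 2 : ℝ) < 0) z).const_mul
        (z ^ (a - 1) * exp (-z) * exp (z / 2))) (fun u _ => ?_) measurableSet_Ioi
    rw [mul_assoc _ (exp _), ← exp_add]; ring_nf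
  calc upperIncompleteGamma a z < ∫ u in Ioi z, z ^ (a - 1) * exp (-z) * exp (-(u - z) / 2) :=
        setIntegral_lt_setIntegral_of_lt measurableSet_Ioi (by simp) hgauss hexp
          fun u hu => exp_neg_mul_rpow_lt ha hz hu
    _ = 2 * z ^ (a - 1) * exp (-z) := by
        rw [integral_const_mul, integral_Ioi_exp_neg_sub_div_two]; ring

theorem stmt13_general (d : ℕ) (hd : 3 ≤ d) (c : ℝ) (n : ℕ)
    (hcn : (d : ℝ) - 2 < c ^ 2 * Real.log n / 2) :
    ((Measure.pi fun _ : Fin d => gaussianReal 0 1)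
        {x : Fin d → ℝ | c ^ 2 * Real.log n < ∑ i, x i ^ 2}).toReal <
      2 ^ (2 - (d : ℝ) / 2) / Real.Gamma ((d : ℝ) / 2) *
        (c ^ 2 * Real.log n) ^ ((d : ℝ) / 2 - 1) * (n : ℝ) ^ (-(c ^ 2) / 2) := by
  have hd3 : (3 : ℝ) ≤ d := by exact_mod_cast hd
  have ht : 0 < c ^ 2 * log n := by linarith
  have hn : (0 : ℝ) < n := Nat.cast_pos.mpr (Nat.pos_of_ne_zero fun h => by simp [h] at ht)
  have hpow : (n : ℝ) ^ (-(c ^ 2) / 2) = exp (-(c ^ 2 * log n / 2)) := by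
    rw [rpow_def_of_pos hn]; ring_nf
  have hconst : 2 * (c ^ 2 * log n / 2) ^ ((d : ℝ) / 2 - 1) =
      2 ^ (2 - (d : ℝ) / 2) * (c ^ 2 * log n) ^ ((d : ℝ) / 2 - 1) := by
    rw [div_rpow ht.le zero_le_two, rpow_sub two_pos, rpow_sub two_pos]
    field_simp
    norm_num
  rw [← measureReal_def, measureReal_pi_gaussianReal_sum_sq_gt (by omega) ht.le, hpow]
  calc upperIncompleteGamma ((d : ℝ) / 2) (c ^ 2 * log n / 2) / Gamma ((d : ℝ) / 2)
      < 2 * (c ^ 2 * log n / 2) ^ ((d : ℝ) / 2 - 1) * exp (-(c ^ 2 * log n / 2)) /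
          Gamma ((d : ℝ) / 2) :=
        div_lt_div_of_pos_right (upperIncompleteGamma_lt (by linarith) (by linarith))
          (Gamma_pos_of_pos (by positivity))
    _ = _ := by rw [hconst]; ring

theorem stmt13 (d : ℕ) (hd : 3 ≤ d) (c : ℝ) (hc : 0 < c) (n : ℕ)
    (hcn : (d : ℝ) - 2 < c ^ 2 * Real.log n / 2) :
    ((Measure.pi fun _ : Fin d => gaussianReal 0 1)
        {x : Fin d → ℝ | c ^ 2 * Real.log n < ∑ i, x i ^ 2}).toReal <
      2 ^ (2 - (d : ℝ) / 2) / Real.Gamma ((d : ℝ) / 2) *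
        (c ^ 2 * Real.log n) ^ ((d : ℝ) / 2 - 1) * (n : ℝ) ^ (-(c ^ 2) / 2) :=
  stmt13_general d hd c n hcn
end

section
/- Let κ > 0, 0 < α < α₂ < 1, β₂ > 0, z₁ = κ/(1−α), z₂ = β₂/(1−α₂). Define K(x) = β₂ e^{−z₁ x^{1−α}} e^{−z₂ x^{1−α₂}} ∫_{n₀}^x s^{−α₂} e^{z₁(s+1)^{1−α}} e^{z₂(s+1)^{1−α₂}} ds and Z(x) = β₂ κ^{−1} x^{α−α₂}. Then lim_{x→∞} K(x)/Z(x) = 1; i.e., K(x) ~ β₂ κ^{−1} x^{α−α₂} as x → ∞. -/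
/-!
The integrand `s^{-α₂} e^{z₁(s+1)^{1-α}} e^{z₂(s+1)^{1-α₂}}` is asymptotic to
`ψ(s) = s^{-α₂} e^{z₁ s^{1-α}} e^{z₂ s^{1-α₂}}`, because `(s+1)^p - s^p → 0` for `p < 1`.
Since `z₁ (1-α) = κ` and `z₂ (1-α₂) = β₂`, the closed form
`G(x) = κ⁻¹ x^{α-α₂} e^{z₁ x^{1-α}} e^{z₂ x^{1-α₂}}` has derivative
`ψ(x) (1 + κ⁻¹ ((α-α₂) x^{α-1} + β₂ x^{α-α₂})) ~ ψ(x)`, and `G → ∞`.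
L'Hôpital's rule in integral form gives `∫_{n₀}^x ~ G(x)`, and the prefactor
`β₂ e^{-z₁ x^{1-α}} e^{-z₂ x^{1-α₂}}` turns `G` into `Z`.
-/

open Real Filter Topology Set MeasureTheory Asymptotics intervalIntegral

lemma tendsto_add_one_rpow_sub_rpow_atTop {p : ℝ} (hp : p < 1) :
    Tendsto (fun x : ℝ => (x + 1) ^ p - x ^ p) atTop (𝓝 0) := by
  have hbound : Tendsto (fun x : ℝ => |p| * x ^ (p - 1)) atTop (𝓝 0) := by
    simpa [neg_sub] using (tendsto_rpow_neg_atTop (by linarith : 0 < 1 - p)).const_mul |p|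
  refine squeeze_zero_norm' ?_ hbound
  filter_upwards [eventually_gt_atTop 0] with x hx
  obtain ⟨c, ⟨hxc, -⟩, hc⟩ := exists_hasDerivAt_eq_slope (fun t => t ^ p)
    (fun t => p * t ^ (p - 1)) (lt_add_one x)
    (continuousOn_id.rpow_const fun t ht => Or.inl (hx.trans_le ht.1).ne')
    fun t ht => hasDerivAt_rpow_const (Or.inl (hx.trans ht.1).ne')
  rw [add_sub_cancel_left, div_one] at hc
  rw [← hc, norm_mul, norm_eq_abs, norm_of_nonneg (rpow_nonneg (hx.trans hxc).le _)]
  exact mul_le_mul_of_nonneg_left (rpow_le_rpow_of_nonpos hx hxc.le (by linarith)) (abs_nonneg p)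

lemma isEquivalent_exp_mul_add_one_rpow (z : ℝ) {p : ℝ} (hp : p < 1) :
    (fun x : ℝ => exp (z * (x + 1) ^ p)) ~[atTop] fun x => exp (z * x ^ p) := by
  refine isEquivalent_of_tendsto_one ?_
  simpa [Pi.div_def, ← exp_sub, mul_sub] using
    ((tendsto_add_one_rpow_sub_rpow_atTop hp).const_mul z).rexp

lemma tendsto_rpow_mul_exp_mul_rpow_atTop (q : ℝ) {c p : ℝ} (hc : 0 < c) (hp : 0 < p) :
    Tendsto (fun x : ℝ => x ^ q * exp (c * x ^ p)) atTop atTop := by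
  refine ((tendsto_exp_mul_div_rpow_atTop (-(q / p)) c hc).comp (tendsto_rpow_atTop hp)).congr' ?_
  filter_upwards [eventually_ge_atTop 0] with x hx
  rw [Function.comp_apply, rpow_neg (rpow_nonneg hx p), ← rpow_mul hx, mul_div_cancel₀ _ hp.ne',
    div_inv_eq_mul, mul_comm]

lemma norm_integral_sub_sub_le_of_hasDerivAt {φ g g' : ℝ → ℝ} {b x ε : ℝ} (hbx : b ≤ x)
    (hg : ∀ s ∈ Icc b x, HasDerivAt g (g' s) s) (hg' : ∀ s ∈ Icc b x, 0 ≤ g' s)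
    (hφ : ∀ s ∈ Icc b x, ‖φ s - g' s‖ ≤ ε * g' s) (hφi : IntervalIntegrable φ volume b x) :
    ‖(∫ s in b..x, φ s) - (g x - g b)‖ ≤ ε * (g x - g b) := by
  have hg'i : IntervalIntegrable g' volume b x :=
    (intervalIntegrable_iff_integrableOn_Ioc_of_le hbx).2 <|
      integrableOn_deriv_of_nonneg (fun s hs => (hg s hs).continuousAt.continuousWithinAt)
        (fun s hs => hg s (Ioo_subset_Icc_self hs)) fun s hs => hg' s (Ioo_subset_Icc_self hs)
  have hftc : ∫ s in b..x, g' s = g x - g b :=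
    integral_eq_sub_of_hasDerivAt (fun s hs => hg s (by rwa [uIcc_of_le hbx] at hs)) hg'i
  calc ‖(∫ s in b..x, φ s) - (g x - g b)‖ = ‖∫ s in b..x, (φ s - g' s)‖ := by
        rw [integral_sub hφi hg'i, hftc]
    _ ≤ ∫ s in b..x, ε * g' s :=
        norm_integral_le_of_norm_le hbx (ae_of_all _ fun s hs => hφ s (Ioc_subset_Icc_self hs))
          (hg'i.const_mul ε)
    _ = ε * (g x - g b) := by rw [intervalIntegral.integral_const_mul, hftc]

theorem Asymptotics.IsEquivalent.integral_atTop_of_hasDerivAt {φ g g' : ℝ → ℝ} {a : ℝ}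
    (hφ : φ ~[atTop] g') (hg : ∀ᶠ x in atTop, HasDerivAt g (g' x) x)
    (hg' : ∀ᶠ x in atTop, 0 ≤ g' x) (hg_top : Tendsto g atTop atTop)
    (hφi : ∀ᶠ x in atTop, IntervalIntegrable φ volume a x) :
    (fun x => ∫ t in a..x, φ t) ~[atTop] g := by
  refine IsLittleO.isEquivalent (isLittleO_iff.2 fun ε hε => ?_)
  obtain ⟨b, hb⟩ := eventually_atTop.1 <| (hφ.isLittleO.bound (half_pos hε)).and <|
    hg.and <| hg'.and hφi
  set C := ‖(∫ t in a..b, φ t) - g b‖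
  filter_upwards [eventually_ge_atTop b, hg_top.eventually_ge_atTop 0,
    hg_top.eventually_ge_atTop ((C - ε / 2 * g b) / (ε / 2))] with x hbx hgx hgx'
  have hφab := (hb b le_rfl).2.2.2
  have hφbx : IntervalIntegrable φ volume b x := hφab.symm.trans (hb x hbx).2.2.2
  have hwindow := norm_integral_sub_sub_le_of_hasDerivAt hbx (fun s hs => (hb s hs.1).2.1)
    (fun s hs => (hb s hs.1).2.2.1)
    (fun s hs => by simpa [norm_of_nonneg (hb s hs.1).2.2.1] using (hb s hs.1).1) hφbx
  have hsplit : (∫ t in a..x, φ t) - g x =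
      ((∫ t in a..b, φ t) - g b) + ((∫ t in b..x, φ t) - (g x - g b)) := by
    rw [← integral_add_adjacent_intervals hφab hφbx]
    ring
  rw [div_le_iff₀ (half_pos hε)] at hgx'
  calc ‖(fun x => ∫ t in a..x, φ t) x - g x‖
      = ‖((∫ t in a..b, φ t) - g b) + ((∫ t in b..x, φ t) - (g x - g b))‖ := by rw [← hsplit]
    _ ≤ C + ε / 2 * (g x - g b) := (norm_add_le _ _).trans (by gcongr)
    _ ≤ ε * ‖g x‖ := by rw [norm_of_nonneg hgx]; linarith

section

variable {κ β₂ α α₂ z₁ z₂ : ℝ}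

lemma hasDerivAt_inv_mul_rpow_mul_exp_mul_exp (hκ : κ ≠ 0) (hz₁ : z₁ * (1 - α) = κ)
    (hz₂ : z₂ * (1 - α₂) = β₂) {x : ℝ} (hx : 0 < x) :
    HasDerivAt (fun t => κ⁻¹ * t ^ (α - α₂) * exp (z₁ * t ^ (1 - α)) * exp (z₂ * t ^ (1 - α₂)))
      (x ^ (-α₂) * exp (z₁ * x ^ (1 - α)) * exp (z₂ * x ^ (1 - α₂)) *
        (1 + κ⁻¹ * ((α - α₂) * x ^ (α - 1) + β₂ * x ^ (α - α₂)))) x := by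
  have hpow {p : ℝ} : HasDerivAt (fun t : ℝ => t ^ p) (p * x ^ (p - 1)) x :=
    hasDerivAt_rpow_const (Or.inl hx.ne')
  refine (((hpow.const_mul κ⁻¹).mul (hpow.const_mul z₁).exp).mul
    (hpow.const_mul z₂).exp).congr_deriv ?_
  have e1 : x ^ (α - α₂ - 1) = x ^ (-α₂) * x ^ (α - 1) := by
    rw [← rpow_add hx]; ring_nf
  have e2 : x ^ (α - α₂) * x ^ (1 - α - 1) = x ^ (-α₂) := by
    rw [← rpow_add hx]; ring_nf
  have e3 : x ^ (1 - α₂ - 1) = x ^ (-α₂) := by ring_nf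
  simp only [Pi.mul_apply]
  rw [← mul_assoc z₁, hz₁, ← mul_assoc z₂, hz₂, e1, e3]
  field_simp
  linear_combination κ * e2

lemma tendsto_inv_mul_rpow_mul_exp_mul_exp_atTop (hκ : 0 < κ) (hz₁ : 0 < z₁) (hz₂ : 0 < z₂)
    (hα : α < 1) (hα₂ : α₂ < 1) :
    Tendsto (fun x => κ⁻¹ * x ^ (α - α₂) * exp (z₁ * x ^ (1 - α)) * exp (z₂ * x ^ (1 - α₂)))
      atTop atTop := by
  refine (((tendsto_rpow_mul_exp_mul_rpow_atTop (α - α₂) hz₁ (sub_pos.2 hα)).const_mul_atTop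
    (inv_pos.2 hκ)).atTop_mul_atTop₀ (tendsto_exp_atTop.comp
      ((tendsto_rpow_atTop (sub_pos.2 hα₂)).const_mul_atTop hz₂))).congr fun x => ?_
  simp only [Function.comp_apply]
  ring

lemma tendsto_one_add_inv_mul_rpow_add_rpow (hαα₂ : α < α₂) (hα₂ : α₂ < 1) :
    Tendsto (fun x => 1 + κ⁻¹ * ((α - α₂) * x ^ (α - 1) + β₂ * x ^ (α - α₂))) atTop (𝓝 1) := by
  have h₁ := tendsto_rpow_neg_atTop (by linarith : 0 < 1 - α)
  have h₂ := tendsto_rpow_neg_atTop (by linarith : 0 < α₂ - α)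
  simpa using (((h₁.const_mul (α - α₂)).add (h₂.const_mul β₂)).const_mul κ⁻¹).const_add 1

theorem isEquivalent_integral_rpow_mul_exp_mul_exp {n₀ : ℝ} (hκ : 0 < κ) (hβ₂ : 0 < β₂)
    (hα : 0 < α) (hαα₂ : α < α₂) (hα₂ : α₂ < 1) (hz₁ : z₁ = κ / (1 - α))
    (hz₂ : z₂ = β₂ / (1 - α₂)) (hn₀ : 0 < n₀) :
    (fun x => ∫ s in n₀..x,
        s ^ (-α₂) * exp (z₁ * (s + 1) ^ (1 - α)) * exp (z₂ * (s + 1) ^ (1 - α₂)))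
      ~[atTop] fun x => κ⁻¹ * x ^ (α - α₂) * exp (z₁ * x ^ (1 - α)) * exp (z₂ * x ^ (1 - α₂)) := by
  set ψ := fun x : ℝ => x ^ (-α₂) * exp (z₁ * x ^ (1 - α)) * exp (z₂ * x ^ (1 - α₂))
  have hshift : (fun s : ℝ => s ^ (-α₂) * exp (z₁ * (s + 1) ^ (1 - α)) *
      exp (z₂ * (s + 1) ^ (1 - α₂))) ~[atTop] ψ :=
    (IsEquivalent.refl.mul (isEquivalent_exp_mul_add_one_rpow z₁ (by linarith))).mul
      (isEquivalent_exp_mul_add_one_rpow z₂ (by linarith))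
  have hderiv : (ψ * fun x => 1 + κ⁻¹ * ((α - α₂) * x ^ (α - 1) + β₂ * x ^ (α - α₂)))
      ~[atTop] ψ := by
    simpa using IsEquivalent.refl.mul ((isEquivalent_const_iff_tendsto one_ne_zero).2
      (tendsto_one_add_inv_mul_rpow_add_rpow (κ := κ) (β₂ := β₂) hαα₂ hα₂))
  have h1α : 0 < 1 - α := by linarith
  have h1α₂ : 0 < 1 - α₂ := by linarith
  refine (hshift.trans hderiv.symm).integral_atTop_of_hasDerivAt ?_ ?_
    (tendsto_inv_mul_rpow_mul_exp_mul_exp_atTop hκ (hz₁ ▸ div_pos hκ h1α)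
      (hz₂ ▸ div_pos hβ₂ h1α₂) (by linarith) hα₂) ?_
  · filter_upwards [eventually_gt_atTop 0] with x hx
    exact hasDerivAt_inv_mul_rpow_mul_exp_mul_exp hκ.ne' (by rw [hz₁]; field_simp)
      (by rw [hz₂]; field_simp) hx
  · refine hderiv.eventually_nonneg ?_
    filter_upwards [eventually_ge_atTop 0] with x hx
    positivity
  · filter_upwards [eventually_ge_atTop n₀] with x hx
    refine ContinuousOn.intervalIntegrable fun s hs => ContinuousAt.continuousWithinAt ?_
    have : 0 < s := hn₀.trans_le (by simpa [hx] using hs.1)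
    fun_prop (disch := exact Or.inl (by positivity))

end

theorem stmt17 (κ β₂ α α₂ z₁ z₂ n₀ : ℝ)
    (hκ : 0 < κ) (hβ₂ : 0 < β₂) (hα : 0 < α) (hαα₂ : α < α₂) (hα₂ : α₂ < 1)
    (hz₁ : z₁ = κ / (1 - α)) (hz₂ : z₂ = β₂ / (1 - α₂)) (hn₀ : 0 < n₀)
    (K Z : ℝ → ℝ)
    (hK : ∀ x, K x = β₂ * Real.exp (-z₁ * x ^ (1 - α)) * Real.exp (-z₂ * x ^ (1 - α₂)) *
      ∫ s in n₀..x, s ^ (-α₂) * Real.exp (z₁ * (s + 1) ^ (1 - α)) *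
        Real.exp (z₂ * (s + 1) ^ (1 - α₂)))
    (hZ : ∀ x, Z x = β₂ * κ⁻¹ * x ^ (α - α₂)) :
    Tendsto (fun x => K x / Z x) atTop (nhds 1) := by
  have hKZ : K ~[atTop] Z := by
    convert (IsEquivalent.refl (u := fun x => β₂ * exp (-z₁ * x ^ (1 - α)) *
      exp (-z₂ * x ^ (1 - α₂)))).mul (isEquivalent_integral_rpow_mul_exp_mul_exp hκ hβ₂ hα hαα₂
        hα₂ hz₁ hz₂ hn₀) using 1 <;> funext x
    · simp only [hK, Pi.mul_apply]
    · simp only [hZ, Pi.mul_apply, neg_mul, exp_neg]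
      field_simp
  refine (isEquivalent_iff_tendsto_one ?_).1 hKZ
  filter_upwards [eventually_gt_atTop 0] with x hx
  rw [hZ]
  positivity
end

section
/- Let G : [𝔣*, 𝔣_max] → [0,1] be a nondecreasing function and suppose there is L > 0 such that (G(𝔣+δ) − G(𝔣))/δ > L for all 𝔣 in an interval and all δ > 0 (strict L-increase). Let F_N be another nondecreasing function (an empirical approximation). If f̂ and f satisfy F_N(f̂) = G(f), then |f̂ − f| ≤ (1/L)( 2|G(f) − F_N(f)| + |G(f̂) − F_N(f̂)| ). -/
/-!
A strict `L`-increase of `G` makes `G` expand distances by at least `L`, so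
`L * |f̂ - f| ≤ |G f̂ - G f| = |G f̂ - F_N f̂|` by `F_N f̂ = G f`; the term `2 * |G f - F_N f|`
is pure slack.
-/

section SlopeLowerBound

variable {G : ℝ → ℝ} {L : ℝ} {I : Set ℝ}

theorem mul_sub_lt_sub_of_lt_slope (hG : ∀ x ∈ I, ∀ δ : ℝ, 0 < δ → L < (G (x + δ) - G x) / δ)
    {x y : ℝ} (hx : x ∈ I) (hxy : x < y) : L * (y - x) < G y - G x := by
  have h := hG x hx (y - x) (sub_pos.mpr hxy)
  rwa [add_sub_cancel, lt_div_iff₀ (sub_pos.mpr hxy)] at h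

theorem mul_abs_sub_le_abs_sub_of_lt_slope
    (hG : ∀ x ∈ I, ∀ δ : ℝ, 0 < δ → L < (G (x + δ) - G x) / δ)
    {x y : ℝ} (hx : x ∈ I) (hy : y ∈ I) : L * |y - x| ≤ |G y - G x| := by
  rcases lt_trichotomy x y with hxy | rfl | hyx
  · rw [abs_of_pos (sub_pos.mpr hxy)]
    exact (mul_sub_lt_sub_of_lt_slope hG hx hxy).le.trans (le_abs_self _)
  · simp
  · rw [abs_sub_comm, abs_sub_comm (G y), abs_of_pos (sub_pos.mpr hyx)]
    exact (mul_sub_lt_sub_of_lt_slope hG hy hyx).le.trans (le_abs_self _)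

end SlopeLowerBound

theorem stmt19_general (G FN : ℝ → ℝ)
    (L : ℝ) (hL : 0 < L) (I : Set ℝ)
    (hLinc : ∀ 𝔣 ∈ I, ∀ δ : ℝ, 0 < δ → L < (G (𝔣 + δ) - G 𝔣) / δ)
    (f fhat : ℝ) (hf : f ∈ I) (hfhat : fhat ∈ I)
    (hdef : FN fhat = G f) :
    |fhat - f| ≤ (1 / L) * (2 * |G f - FN f| + |G fhat - FN fhat|) := by
  have hexpand : L * |fhat - f| ≤ |G fhat - FN fhat| :=
    hdef ▸ mul_abs_sub_le_abs_sub_of_lt_slope hLinc hf hfhat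
  rw [one_div, inv_mul_eq_div, le_div_iff₀ hL, mul_comm]
  linarith [abs_nonneg (G f - FN f)]

theorem stmt19 (G FN : ℝ → ℝ) (hG : Monotone G) (hFN : Monotone FN)
    (L : ℝ) (hL : 0 < L) (I : Set ℝ) (hI : I.OrdConnected)
    (hLinc : ∀ 𝔣 ∈ I, ∀ δ : ℝ, 0 < δ → L < (G (𝔣 + δ) - G 𝔣) / δ)
    (f fhat : ℝ) (hf : f ∈ I) (hfhat : fhat ∈ I)
    (hdef : FN fhat = G f) :
    |fhat - f| ≤ (1 / L) * (2 * |G f - FN f| + |G fhat - FN fhat|) :=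
  stmt19_general G FN L hL I hLinc f fhat hf hfhat hdef
end
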